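/- Let G = (V, E) be a simple graph on a finite vertex set V with nonnegative edge weights w_e ≥ 0, and let M_l and M_f be matroids on V, with P_l and P_f the convex hulls of the indicator vectors of the independent sets of M_l and M_f respectively. For a distribution π over subsets of V supported on independent sets of M_l (π(S) = 0 whenever S is not M_l-independent), with marginals q_u and pairwise marginals q_{uv}, define the follower's value Θ(π) = max over independent sets I of M_f of ∑_{e=uv∈E} [1_I(u)·w_e(1−q_u) + 1_I(v)·w_e(1−q_v) + 1_I(u)·1_I(v)·(w_e(1−q_{uv}) − w_e(1−q_u) − w_e(1−q_v))]. Suppose q' ∈ P_l satisfies sup_{x∈P_f} L̃^{q'}(x) ≤ sup_{x∈P_f} L̃^{q}(x) for every q ∈ P_l, and suppose π' is a distribution supported on independent sets of M_l whose marginal vector equals q'. Then Θ(π') ≤ (8/3)·Θ(π) for every distribution π supported on independent sets of M_l; that is, π' is an 8/3-approximation for the randomized max-vertex-cover interdiction problem min_π Θ(π). -/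

import Mathlib

open Finset

/-- The marginal probability that `u` is interdicted under distribution `π`. -/
def marg {V : Type*} [Fintype V] [DecidableEq V] (π : Finset V → ℝ) (u : V) : ℝ :=
  ∑ S ∈ univ.filter (fun S : Finset V => u ∈ S), π S

/-- The pairwise marginal probability that both `u` and `v` are interdicted under `π`. -/
def marg2 {V : Type*} [Fintype V] [DecidableEq V] (π : Finset V → ℝ) (u v : V) : ℝ :=
  ∑ S ∈ univ.filter (fun S : Finset V => u ∈ S ∧ v ∈ S), π S

/-- The indicator vector of a finite vertex set. -/
def indVec {V : Type*} [DecidableEq V] (I : Finset V) : V → ℝ :=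
  fun v => if v ∈ I then 1 else 0

/-- The matroid polytope: the convex hull of the indicator vectors of the independent sets. -/
def matroidPolytope {V : Type*} [Fintype V] [DecidableEq V] (M : Matroid V) : Set (V → ℝ) :=
  convexHull ℝ {y : V → ℝ | ∃ I : Finset V, M.Indep ↑I ∧ y = indVec I}

/-- The linearized surrogate `L̃^q(x) = ∑_{e=uv} w_e·[x_u(1 − q_u) + x_v(1 − q_v)]`. -/
def Ltilde {V : Type*} (E : Finset (V × V)) (w : V × V → ℝ)
    (q : V → ℝ) (x : V → ℝ) : ℝ :=
  ∑ e ∈ E, w e * (x e.1 * (1 - q e.1) + x e.2 * (1 - q e.2))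

/-- The follower's optimal value `Θ(π)`: the maximum, over independent sets `I` of the
follower's matroid `Mf`, of the expected total weight covered by the attacked
and unprotected vertices, against the leader's randomized strategy `π`. -/
noncomputable def Theta {V : Type*} [Fintype V] [DecidableEq V]
    (E : Finset (V × V)) (w : V × V → ℝ) (Mf : Matroid V) (π : Finset V → ℝ) : ℝ :=
  sSup {r : ℝ | ∃ I : Finset V, Mf.Indep ↑I ∧
    r = ∑ e ∈ E,
      ((if e.1 ∈ I then (1 : ℝ) else 0) * (w e * (1 - marg π e.1))
        + (if e.2 ∈ I then (1 : ℝ) else 0) * (w e * (1 - marg π e.2))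
        + (if e.1 ∈ I then (1 : ℝ) else 0) * (if e.2 ∈ I then (1 : ℝ) else 0) *
          (w e * (1 - marg2 π e.1 e.2) - w e * (1 - marg π e.1) - w e * (1 - marg π e.2)))}

/-!
The linearized surrogate sandwiches the follower's value: writing `q` for the marginals of `π`,
`Θ(π) ≤ max_{P_f} L̃^q ≤ 2·Θ(π)`. Both bounds are checked edge by edge at indicator vectors of
independent sets, which suffices because a linear functional attains its maximum over a matroid
polytope at such a vertex. The lower bound is the Fréchet inequality `q_u + q_v − 1 ≤ q_{uv}`, the
upper bound uses `q_{uv} ≤ q_u, q_v ≤ 1`. Chaining the two bounds through the optimality of `q'`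
gives `Θ(π') ≤ 2·Θ(π)`, which is stronger than the factor `8/3`.
-/

lemma isLinearMap_Ltilde {V : Type*} (E : Finset (V × V)) (w : V × V → ℝ) (q : V → ℝ) :
    IsLinearMap ℝ (Ltilde E w q) where
  map_add x y := by
    simp only [Ltilde, Pi.add_apply, ← sum_add_distrib]
    exact sum_congr rfl fun e _ => by ring
  map_smul c x := by
    simp only [Ltilde, Pi.smul_apply, smul_eq_mul, mul_sum]
    exact sum_congr rfl fun e _ => by ring

section Interdiction

variable {V : Type*} [Fintype V] [DecidableEq V]

section Marginals

variable (π : Finset V → ℝ)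

lemma marg_le_sum (hπ : ∀ S, 0 ≤ π S) (u : V) : marg π u ≤ ∑ S : Finset V, π S :=
  sum_le_sum_of_subset_of_nonneg (subset_univ _) fun S _ _ => hπ S

lemma marg2_le_marg_left (hπ : ∀ S, 0 ≤ π S) (u v : V) : marg2 π u v ≤ marg π u :=
  sum_le_sum_of_subset_of_nonneg (fun S hS => mem_filter.2 ⟨mem_univ S, (mem_filter.1 hS).2.1⟩)
    fun S _ _ => hπ S

lemma marg2_le_marg_right (hπ : ∀ S, 0 ≤ π S) (u v : V) : marg2 π u v ≤ marg π v :=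
  sum_le_sum_of_subset_of_nonneg (fun S hS => mem_filter.2 ⟨mem_univ S, (mem_filter.1 hS).2.2⟩)
    fun S _ _ => hπ S

lemma marg_add_marg_le_marg2_add_sum (hπ : ∀ S, 0 ≤ π S) (u v : V) :
    marg π u + marg π v ≤ marg2 π u v + ∑ S : Finset V, π S := by
  have hunion : ∑ S ∈ univ.filter (fun S : Finset V => u ∈ S ∨ v ∈ S), π S
      ≤ ∑ S : Finset V, π S :=
    sum_le_sum_of_subset_of_nonneg (subset_univ _) fun S _ _ => hπ S
  rw [marg, marg, marg2, ← sum_union_inter, ← filter_or, ← filter_and]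
  linarith

end Marginals

lemma indVec_mem_matroidPolytope {M : Matroid V} {I : Finset V} (hI : M.Indep ↑I) :
    indVec I ∈ matroidPolytope M :=
  subset_convexHull ℝ _ ⟨I, hI, rfl⟩

lemma marg_mem_matroidPolytope (M : Matroid V) (π : Finset V → ℝ) (hπ : ∀ S, 0 ≤ π S)
    (hsum : ∑ S : Finset V, π S = 1) (hsupp : ∀ S : Finset V, ¬ M.Indep ↑S → π S = 0) :
    marg π ∈ matroidPolytope M := by
  classical
  set t := univ.filter fun S : Finset V => M.Indep ↑S
  have hvanish : ∀ S ∈ univ, S ∉ t → π S = 0 := fun S _ hS =>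
    hsupp S (by simpa [t] using hS)
  have hsum_t : ∑ S ∈ t, π S = 1 := by
    rw [← hsum]
    exact sum_subset (subset_univ t) hvanish
  have hcenter : t.centerMass π indVec = marg π := by
    funext v
    rw [centerMass, hsum_t, inv_one, one_smul, Finset.sum_apply,
      sum_subset (subset_univ t) fun S hS ht => by simp [hvanish S hS ht], marg, sum_filter]
    exact sum_congr rfl fun S _ => by simp [indVec]
  rw [← hcenter]
  exact centerMass_mem_convexHull _ (fun S _ => hπ S) (by rw [hsum_t]; norm_num)
    fun S hS => ⟨S, (mem_filter.1 hS).2, rfl⟩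

lemma exists_indep_isGreatest_Ltilde_image (E : Finset (V × V)) (w : V × V → ℝ)
    (M : Matroid V) (q : V → ℝ) :
    ∃ I : Finset V, M.Indep ↑I ∧
      IsGreatest (Ltilde E w q '' matroidPolytope M) (Ltilde E w q (indVec I)) := by
  obtain ⟨I, hI, hmax⟩ := Set.exists_max_image {I : Finset V | M.Indep ↑I}
    (fun I => Ltilde E w q (indVec I)) (Set.toFinite _) ⟨∅, by simp⟩
  have hbound : matroidPolytope M ⊆ {x | Ltilde E w q x ≤ Ltilde E w q (indVec I)} :=
    convexHull_min (by rintro _ ⟨J, hJ, rfl⟩; exact hmax J hJ)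
      (convex_halfSpace_le (isLinearMap_Ltilde E w q) _)
  exact ⟨I, hI, Set.mem_image_of_mem _ (indVec_mem_matroidPolytope hI),
    by rintro _ ⟨x, hx, rfl⟩; exact hbound hx⟩

section Theta

variable (E : Finset (V × V)) (w : V × V → ℝ) (π : Finset V → ℝ)

/-- `Theta E w M π` is by definition the supremum of this over the `M`-independent sets `I`. -/
def coverValue (I : Finset V) : ℝ :=
  ∑ e ∈ E,
      ((if e.1 ∈ I then (1 : ℝ) else 0) * (w e * (1 - marg π e.1))
        + (if e.2 ∈ I then (1 : ℝ) else 0) * (w e * (1 - marg π e.2))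
        + (if e.1 ∈ I then (1 : ℝ) else 0) * (if e.2 ∈ I then (1 : ℝ) else 0) *
          (w e * (1 - marg2 π e.1 e.2) - w e * (1 - marg π e.1) - w e * (1 - marg π e.2)))

lemma coverValue_le_Theta (M : Matroid V) {I : Finset V} (hI : M.Indep ↑I) :
    coverValue E w π I ≤ Theta E w M π :=
  le_csSup ((Set.finite_range (coverValue E w π)).bddAbove.mono
    (by rintro _ ⟨J, -, rfl⟩; exact ⟨J, rfl⟩)) ⟨I, hI, rfl⟩

lemma Theta_nonneg (M : Matroid V) : 0 ≤ Theta E w M π := by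
  simpa [coverValue] using coverValue_le_Theta E w π M (I := ∅) (by simp)

variable {E w π}

lemma coverValue_le_Ltilde_marg (hw : ∀ e ∈ E, 0 ≤ w e) (hπ : ∀ S, 0 ≤ π S)
    (hsum : ∑ S : Finset V, π S = 1) (I : Finset V) :
    coverValue E w π I ≤ Ltilde E w (marg π) (indVec I) := by
  refine sum_le_sum fun e he => ?_
  have hfrechet := marg_add_marg_le_marg2_add_sum π hπ e.1 e.2
  have hwe := hw e he
  simp only [indVec]
  split_ifs <;> nlinarith

lemma Ltilde_marg_le_two_mul_coverValue (hw : ∀ e ∈ E, 0 ≤ w e) (hπ : ∀ S, 0 ≤ π S)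
    (hsum : ∑ S : Finset V, π S = 1) (I : Finset V) :
    Ltilde E w (marg π) (indVec I) ≤ 2 * coverValue E w π I := by
  rw [coverValue, mul_sum]
  refine sum_le_sum fun e he => ?_
  have := marg2_le_marg_left π hπ e.1 e.2
  have := marg2_le_marg_right π hπ e.1 e.2
  have := marg_le_sum π hπ e.1
  have := marg_le_sum π hπ e.2
  have hwe := hw e he
  simp only [indVec]
  split_ifs <;> nlinarith

lemma Theta_le_sSup_Ltilde_marg (M : Matroid V) (hw : ∀ e ∈ E, 0 ≤ w e)
    (hπ : ∀ S, 0 ≤ π S) (hsum : ∑ S : Finset V, π S = 1) :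
    Theta E w M π ≤ sSup (Ltilde E w (marg π) '' matroidPolytope M) := by
  refine csSup_le ⟨_, ∅, by simp, rfl⟩ ?_
  rintro _ ⟨I, hI, rfl⟩
  obtain ⟨J, -, hgreatest⟩ := exists_indep_isGreatest_Ltilde_image E w M (marg π)
  exact (coverValue_le_Ltilde_marg hw hπ hsum I).trans
    (le_csSup hgreatest.bddAbove (Set.mem_image_of_mem _ (indVec_mem_matroidPolytope hI)))

lemma sSup_Ltilde_marg_le_two_mul_Theta (M : Matroid V) (hw : ∀ e ∈ E, 0 ≤ w e)
    (hπ : ∀ S, 0 ≤ π S) (hsum : ∑ S : Finset V, π S = 1) :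
    sSup (Ltilde E w (marg π) '' matroidPolytope M) ≤ 2 * Theta E w M π := by
  obtain ⟨I, hI, hgreatest⟩ := exists_indep_isGreatest_Ltilde_image E w M (marg π)
  rw [hgreatest.csSup_eq]
  linarith [Ltilde_marg_le_two_mul_coverValue hw hπ hsum I, coverValue_le_Theta E w π M hI]

end Theta

end Interdiction

theorem interdiction_approximation_general {V : Type*} [Fintype V] [DecidableEq V]
    (E : Finset (V × V)) (w : V × V → ℝ) (hw : ∀ e ∈ E, 0 ≤ w e)
    (Ml Mf : Matroid V)
    (q' : V → ℝ)
    (hq'opt : ∀ q ∈ matroidPolytope Ml,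
      sSup (Ltilde E w q' '' matroidPolytope Mf) ≤ sSup (Ltilde E w q '' matroidPolytope Mf))
    (π' : Finset V → ℝ) (hπ'pos : ∀ S : Finset V, 0 ≤ π' S)
    (hπ'sum : ∑ S : Finset V, π' S = 1)
    (hπ'marg : ∀ v : V, marg π' v = q' v) :
    ∀ π : Finset V → ℝ, (∀ S : Finset V, 0 ≤ π S) → (∑ S : Finset V, π S = 1) →
      (∀ S : Finset V, ¬ Ml.Indep ↑S → π S = 0) →
      Theta E w Mf π' ≤ (8 / 3) * Theta E w Mf π := by
  intro π hπpos hπsum hπsupp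
  obtain rfl : marg π' = q' := funext hπ'marg
  calc Theta E w Mf π'
      ≤ sSup (Ltilde E w (marg π') '' matroidPolytope Mf) :=
        Theta_le_sSup_Ltilde_marg Mf hw hπ'pos hπ'sum
    _ ≤ sSup (Ltilde E w (marg π) '' matroidPolytope Mf) :=
        hq'opt _ (marg_mem_matroidPolytope Ml π hπpos hπsum hπsupp)
    _ ≤ 2 * Theta E w Mf π := sSup_Ltilde_marg_le_two_mul_Theta Mf hw hπpos hπsum
    _ ≤ 8 / 3 * Theta E w Mf π := by linarith [Theta_nonneg E w π Mf]

/-- The `8/3`-approximation for randomized max-vertex-cover interdiction: if `q' ∈ P_l`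
minimizes `sup_{x ∈ P_f} L̃^q(x)` over `q ∈ P_l`, and `π'` is a distribution supported on
the independent sets of the leader's matroid `Ml` with marginal vector `q'`, then
`Θ(π') ≤ (8/3)·Θ(π)` for every distribution `π` supported on independent sets of `Ml`. -/
theorem interdiction_approximation {V : Type*} [Fintype V] [DecidableEq V]
    (E : Finset (V × V)) (w : V × V → ℝ) (hw : ∀ e ∈ E, 0 ≤ w e)
    (hloop : ∀ e ∈ E, e.1 ≠ e.2) (hori : ∀ e ∈ E, (e.2, e.1) ∉ E)
    (Ml Mf : Matroid V) (hMl : Ml.E = Set.univ) (hMf : Mf.E = Set.univ)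
    (q' : V → ℝ) (hq'mem : q' ∈ matroidPolytope Ml)
    (hq'opt : ∀ q ∈ matroidPolytope Ml,
      sSup (Ltilde E w q' '' matroidPolytope Mf) ≤ sSup (Ltilde E w q '' matroidPolytope Mf))
    (π' : Finset V → ℝ) (hπ'pos : ∀ S : Finset V, 0 ≤ π' S)
    (hπ'sum : ∑ S : Finset V, π' S = 1)
    (hπ'supp : ∀ S : Finset V, ¬ Ml.Indep ↑S → π' S = 0)
    (hπ'marg : ∀ v : V, marg π' v = q' v) :
    ∀ π : Finset V → ℝ, (∀ S : Finset V, 0 ≤ π S) → (∑ S : Finset V, π S = 1) →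
      (∀ S : Finset V, ¬ Ml.Indep ↑S → π S = 0) →
      Theta E w Mf π' ≤ (8 / 3) * Theta E w Mf π :=
  interdiction_approximation_general E w hw Ml Mf q' hq'opt π' hπ'pos hπ'sum hπ'marg
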